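/- arXiv:1907.07723 — 5 statements merged into one kernel-verified Lean document; each statement's English description precedes it below -/
import Mathlib

section
/- Let z* be a point of the probability simplex Δ ⊂ ℝ^d, let 0 ≤ θ ≤ 1/d, and let z*_p be the ℓ1-projection of z* onto the restricted simplex Δ_θ = {z : ‖z‖₁ = 1, z_i ≥ θ ∀i} (i.e., a minimizer of ‖z − z*‖₁ over z ∈ Δ_θ). Then ‖z*_p − z*‖₁ ≤ 2θ(d − 1). -/
/-!
Mixing `z*` with the uniform distribution, `w = (1 - dθ) z* + θ 𝟙`, gives a point of `Δ_θ`
with `w_i - z*_i = θ (1 - d z*_i)`. As `0 ≤ z*_i ≤ 1`,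
`|1 - d z*_i| ≤ 1 + (d - 2) z*_i`, and summing gives `‖w - z*‖₁ ≤ θ (d + d - 2)`.
The projection is at least as close to `z*` as `w`.
-/

open Finset

variable {ι : Type*} [Fintype ι]

def restrictedSimplex (θ : ℝ) : Set (ι → ℝ) :=
  {z | (∑ i, |z i|) = 1 ∧ ∀ i, θ ≤ z i}

/-- The convex combination `(1 - nθ) z + nθ u` with the uniform distribution `u`, `n = card ι`. -/
noncomputable def mixUniform (θ : ℝ) (z : ι → ℝ) : ι → ℝ :=
  fun i => (1 - Fintype.card ι * θ) * z i + θ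

lemma one_le_card_of_mem_stdSimplex {z : ι → ℝ} (hz : z ∈ stdSimplex ℝ ι) :
    (1 : ℝ) ≤ Fintype.card ι := by
  cases isEmpty_or_nonempty ι with
  | inl _ => simp [stdSimplex_of_isEmpty_index] at hz
  | inr _ => exact_mod_cast Fintype.card_pos

lemma mixUniform_mem_restrictedSimplex {θ : ℝ} (hθ0 : 0 ≤ θ) (hθ : Fintype.card ι * θ ≤ 1)
    {z : ι → ℝ} (hz : z ∈ stdSimplex ℝ ι) : mixUniform θ z ∈ restrictedSimplex θ := by
  have le_mix (i : ι) : θ ≤ mixUniform θ z i :=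
    le_add_of_nonneg_left (mul_nonneg (sub_nonneg.2 hθ) (hz.1 i))
  refine ⟨?_, le_mix⟩
  calc ∑ i, |mixUniform θ z i| = ∑ i, mixUniform θ z i :=
        sum_congr rfl fun i _ => abs_of_nonneg (hθ0.trans (le_mix i))
    _ = 1 := by
        simp only [mixUniform, sum_add_distrib, ← mul_sum, hz.2, sum_const, card_univ,
          nsmul_eq_mul]
        ring

lemma sum_abs_mixUniform_sub {θ : ℝ} (hθ0 : 0 ≤ θ) (z : ι → ℝ) :
    ∑ i, |mixUniform θ z i - z i| = θ * ∑ i, |1 - Fintype.card ι * z i| := by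
  rw [mul_sum]
  refine sum_congr rfl fun i _ => ?_
  rw [← abs_of_nonneg hθ0, ← abs_mul, abs_of_nonneg hθ0, mixUniform]
  ring_nf

lemma abs_one_sub_mul_le {n z : ℝ} (hn : 1 ≤ n) (hz0 : 0 ≤ z) (hz1 : z ≤ 1) :
    |1 - n * z| ≤ 1 + (n - 2) * z := by
  rw [abs_le]
  constructor <;> nlinarith

lemma sum_abs_one_sub_card_mul_le {z : ι → ℝ} (hz : z ∈ stdSimplex ℝ ι) :
    ∑ i, |1 - Fintype.card ι * z i| ≤ 2 * (Fintype.card ι - 1) := by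
  have hn := one_le_card_of_mem_stdSimplex hz
  calc ∑ i, |1 - Fintype.card ι * z i| ≤ ∑ i, (1 + (Fintype.card ι - 2) * z i) :=
        sum_le_sum fun i _ =>
          abs_one_sub_mul_le hn (mem_Icc_of_mem_stdSimplex hz i).1 (mem_Icc_of_mem_stdSimplex hz i).2
    _ = 2 * (Fintype.card ι - 1) := by
        simp only [sum_add_distrib, ← mul_sum, hz.2, sum_const, card_univ, nsmul_eq_mul]
        ring

lemma dist_mixUniform_le {θ : ℝ} (hθ0 : 0 ≤ θ) {z : ι → ℝ} (hz : z ∈ stdSimplex ℝ ι) :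
    ∑ i, |mixUniform θ z i - z i| ≤ 2 * θ * (Fintype.card ι - 1) := by
  rw [sum_abs_mixUniform_sub hθ0, mul_comm 2 θ, mul_assoc]
  exact mul_le_mul_of_nonneg_left (sum_abs_one_sub_card_mul_le hz) hθ0

theorem dist_proj_restricted_simplex_general (d : ℕ) (θ : ℝ)
    (hθ0 : 0 ≤ θ) (hθd : θ ≤ 1 / d)
    (zstar : Fin d → ℝ) (hz : zstar ∈ stdSimplex ℝ (Fin d))
    (zp : Fin d → ℝ)
    (hproj : ∀ z ∈ {z : Fin d → ℝ | (∑ i, |z i|) = 1 ∧ ∀ i, θ ≤ z i},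
      (∑ i, |zp i - zstar i|) ≤ ∑ i, |z i - zstar i|) :
    (∑ i, |zp i - zstar i|) ≤ 2 * θ * (d - 1) := by
  have hdθ : (Fintype.card (Fin d) : ℝ) * θ ≤ 1 := by
    rw [Fintype.card_fin]
    rcases Nat.eq_zero_or_pos d with rfl | hd
    · simp
    · exact (le_div_iff₀' (Nat.cast_pos.2 hd)).1 hθd
  calc (∑ i, |zp i - zstar i|) ≤ ∑ i, |mixUniform θ zstar i - zstar i| :=
        hproj _ (mixUniform_mem_restrictedSimplex hθ0 hdθ hz)
    _ ≤ 2 * θ * (d - 1) := by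
        simpa only [Fintype.card_fin] using dist_mixUniform_le hθ0 hz

/-- If `z*` lies in the simplex `Δ ⊂ ℝ^d`, `0 ≤ θ ≤ 1/d`, and `z*_p` is an
ℓ1-projection of `z*` onto the restricted simplex `Δ_θ`, then `‖z*_p − z*‖₁ ≤ 2θ(d−1)`. -/
theorem dist_proj_restricted_simplex (d : ℕ) (hd : 0 < d) (θ : ℝ)
    (hθ0 : 0 ≤ θ) (hθd : θ ≤ 1 / d)
    (zstar : Fin d → ℝ) (hz : zstar ∈ stdSimplex ℝ (Fin d))
    (zp : Fin d → ℝ)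
    (hzp : zp ∈ {z : Fin d → ℝ | (∑ i, |z i|) = 1 ∧ ∀ i, θ ≤ z i})
    (hproj : ∀ z ∈ {z : Fin d → ℝ | (∑ i, |z i|) = 1 ∧ ∀ i, θ ≤ z i},
      (∑ i, |zp i - zstar i|) ≤ ∑ i, |z i - zstar i|) :
    (∑ i, |zp i - zstar i|) ≤ 2 * θ * (d - 1) :=
  dist_proj_restricted_simplex_general d θ hθ0 hθd zstar hz zp hproj
end

section
/- (Follow-the-Leader saddle-point stability, upper bound.) Let L_1, ..., L_T : X × Y → ℝ be convex-concave functions on compact convex sets, each G-Lipschitz with respect to a norm ‖·‖ on the product, and for each t let (x_{t+1}, y_{t+1}) be a saddle point of Σ_{τ=1}^{t} L_τ. Then Σ_{t=1}^T L_t(x_{t+1}, y_{t+1}) − min_{x∈X} max_{y∈Y} Σ_{t=1}^T L_t(x, y) ≤ G·Σ_{t=1}^T ‖y_t − y_{t+1}‖, where (x_1, y_1) ∈ X × Y is arbitrary. -/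
open Finset

/-!
Write `S_t = ∑_{τ < t} L_τ`. Since `(x_t, y_t)` and `(x_{t+1}, y_{t+1})` are saddle points of
`S_t` and `S_{t+1}`, the leader's value satisfies
`S_t(x_t, y_t) ≤ S_t(x_{t+1}, y_t) = S_{t+1}(x_{t+1}, y_t) - L_t(x_{t+1}, y_t)
  ≤ S_{t+1}(x_{t+1}, y_{t+1}) - L_t(x_{t+1}, y_t)`,
so telescoping bounds the FTL payoff `∑ₜ L_t(x_{t+1}, y_{t+1})` by `S_T(x_T, y_T)` plus
`∑ₜ (L_t(x_{t+1}, y_{t+1}) - L_t(x_{t+1}, y_t)) ≤ G ∑ₜ ‖y_t - y_{t+1}‖`. Finally `S_T(x_T, y_T)`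
is at most the minimax value, since `x_T` minimises `S_T(·, y_T)`.
-/

theorem ftl_payoff_le_leader_value_add {α β : Type*} (L : ℕ → α → β → ℝ) (x : ℕ → α) (y : ℕ → β)
    (δ : ℕ → ℝ) (T : ℕ)
    (hmin : ∀ t < T, ∑ τ ∈ range t, L τ (x t) (y t) ≤ ∑ τ ∈ range t, L τ (x (t + 1)) (y t))
    (hmax : ∀ t < T,
      ∑ τ ∈ range (t + 1), L τ (x (t + 1)) (y t) ≤ ∑ τ ∈ range (t + 1), L τ (x (t + 1)) (y (t + 1)))
    (hδ : ∀ t < T, L t (x (t + 1)) (y (t + 1)) - L t (x (t + 1)) (y t) ≤ δ t) :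
    ∑ t ∈ range T, L t (x (t + 1)) (y (t + 1)) ≤
      ∑ τ ∈ range T, L τ (x T) (y T) + ∑ t ∈ range T, δ t := by
  induction T with
  | zero => simp
  | succ n ih =>
    have ih := ih (fun t ht => hmin t (by omega)) (fun t ht => hmax t (by omega))
      (fun t ht => hδ t (by omega))
    have hmax := hmax n (by omega)
    rw [sum_range_succ] at hmax
    rw [sum_range_succ, sum_range_succ δ]
    linarith [hmin n (by omega), hδ n (by omega)]

theorem le_sInf_sSup_of_forall_le {α β : Type*} (X : Set α) (Y : Set β) (f : α → β → ℝ)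
    {a : α} {b : β} (hX : X.Nonempty) (hb : b ∈ Y) (hmin : ∀ x ∈ X, f a b ≤ f x b)
    (hbdd : ∀ x ∈ X, BddAbove (f x '' Y)) :
    f a b ≤ sInf ((fun x => sSup (f x '' Y)) '' X) := by
  refine le_csInf (hX.image _) ?_
  rintro _ ⟨x, hx, rfl⟩
  exact (hmin x hx).trans (le_csSup (hbdd x hx) ⟨b, hb, rfl⟩)

theorem ContinuousOn.of_abs_sub_le_mul_norm {F : Type*} [SeminormedAddCommGroup F]
    {f : F → ℝ} {Y : Set F} {G : ℝ} (h : ∀ y₁ ∈ Y, ∀ y₂ ∈ Y, |f y₁ - f y₂| ≤ G * ‖y₁ - y₂‖) :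
    ContinuousOn f Y :=
  (LipschitzOnWith.of_dist_le' (by simpa only [dist_eq_norm, Real.norm_eq_abs] using h)).continuousOn

theorem ftl_saddle_stability_upper_general
    {E F : Type*} [NormedAddCommGroup E] [NormedSpace ℝ E]
    [NormedAddCommGroup F] [NormedSpace ℝ F]
    (X : Set E) (Y : Set F)
    (hYc : IsCompact Y)
    (T : ℕ) (G : ℝ)
    (L : ℕ → E → F → ℝ)
    (hLip : ∀ t, ∀ x1 ∈ X, ∀ y1 ∈ Y, ∀ x2 ∈ X, ∀ y2 ∈ Y,
      |L t x1 y1 - L t x2 y2| ≤ G * ‖((x1 - x2 : E), (y1 - y2 : F))‖)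
    (x : ℕ → E) (y : ℕ → F)
    (hxmem : ∀ t, x t ∈ X) (hymem : ∀ t, y t ∈ Y)
    -- `(x (t+1), y (t+1))` is a saddle point of `∑_{τ ≤ t} L τ`
    (hsaddle : ∀ t < T, ∀ x' ∈ X, ∀ y' ∈ Y,
      (∑ τ ∈ range (t + 1), L τ (x (t + 1)) y') ≤ ∑ τ ∈ range (t + 1), L τ (x (t + 1)) (y (t + 1)) ∧
      (∑ τ ∈ range (t + 1), L τ (x (t + 1)) (y (t + 1))) ≤ ∑ τ ∈ range (t + 1), L τ x' (y (t + 1))) :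
    (∑ t ∈ range T, L t (x (t + 1)) (y (t + 1))) -
      sInf ((fun x' => sSup ((fun y' => ∑ t ∈ range T, L t x' y') '' Y)) '' X) ≤
      G * ∑ t ∈ range T, ‖y t - y (t + 1)‖ := by
  have hLipY : ∀ t, ∀ x' ∈ X, ∀ y₁ ∈ Y, ∀ y₂ ∈ Y,
      |L t x' y₁ - L t x' y₂| ≤ G * ‖y₁ - y₂‖ := fun t x' hx' y₁ hy₁ y₂ hy₂ => by
    simpa using hLip t x' hx' y₁ hy₁ x' hx' y₂ hy₂
  have hleader_min : ∀ t ≤ T, ∀ x' ∈ X,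
      ∑ τ ∈ range t, L τ (x t) (y t) ≤ ∑ τ ∈ range t, L τ x' (y t) := by
    rintro (_ | t) ht x' hx'
    · simp
    · exact (hsaddle t (by omega) x' hx' _ (hymem 0)).2
  have hpayoff := ftl_payoff_le_leader_value_add L x y (fun t => G * ‖y t - y (t + 1)‖) T
    (fun t ht => hleader_min t ht.le _ (hxmem _))
    (fun t ht => (hsaddle t ht _ (hxmem 0) _ (hymem _)).1)
    (fun t _ => by
      rw [norm_sub_rev]
      exact (le_abs_self _).trans (hLipY t _ (hxmem _) _ (hymem _) _ (hymem _)))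
  have hminimax := le_sInf_sSup_of_forall_le X Y (fun x' y' => ∑ t ∈ range T, L t x' y')
    ⟨x 0, hxmem 0⟩ (hymem T) (hleader_min T le_rfl) fun x' hx' =>
      hYc.bddAbove_image <| continuousOn_finsetSum _ fun t _ =>
        ContinuousOn.of_abs_sub_le_mul_norm (hLipY t x' hx')
  rw [← mul_sum] at hpayoff
  linarith

/-- Follow-the-Leader saddle-point stability, upper bound. If `(x_{t+1}, y_{t+1})`
is a saddle point of the partial sum `∑_{τ≤t} L_τ`, then the cumulative FTL value exceeds the
minimax value of the total sum by at most `G ∑ₜ ‖yₜ − y_{t+1}‖`. -/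
theorem ftl_saddle_stability_upper
    {E F : Type*} [NormedAddCommGroup E] [NormedSpace ℝ E]
    [NormedAddCommGroup F] [NormedSpace ℝ F]
    (X : Set E) (Y : Set F)
    (hXc : IsCompact X) (hXconv : Convex ℝ X) (hXne : X.Nonempty)
    (hYc : IsCompact Y) (hYconv : Convex ℝ Y) (hYne : Y.Nonempty)
    (T : ℕ) (G : ℝ)
    (L : ℕ → E → F → ℝ)
    (hconv : ∀ t, ∀ y ∈ Y, ConvexOn ℝ X (fun x => L t x y))
    (hconc : ∀ t, ∀ x ∈ X, ConcaveOn ℝ Y (fun y => L t x y))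
    (hLip : ∀ t, ∀ x1 ∈ X, ∀ y1 ∈ Y, ∀ x2 ∈ X, ∀ y2 ∈ Y,
      |L t x1 y1 - L t x2 y2| ≤ G * ‖((x1 - x2 : E), (y1 - y2 : F))‖)
    (x : ℕ → E) (y : ℕ → F)
    (hxmem : ∀ t, x t ∈ X) (hymem : ∀ t, y t ∈ Y)
    -- `(x (t+1), y (t+1))` is a saddle point of `∑_{τ ≤ t} L τ`
    (hsaddle : ∀ t < T, ∀ x' ∈ X, ∀ y' ∈ Y,
      (∑ τ ∈ range (t + 1), L τ (x (t + 1)) y') ≤ ∑ τ ∈ range (t + 1), L τ (x (t + 1)) (y (t + 1)) ∧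
      (∑ τ ∈ range (t + 1), L τ (x (t + 1)) (y (t + 1))) ≤ ∑ τ ∈ range (t + 1), L τ x' (y (t + 1))) :
    (∑ t ∈ range T, L t (x (t + 1)) (y (t + 1))) -
      sInf ((fun x' => sSup ((fun y' => ∑ t ∈ range T, L t x' y') '' Y)) '' X) ≤
      G * ∑ t ∈ range T, ‖y t - y (t + 1)‖ :=
  ftl_saddle_stability_upper_general X Y hYc T G L hLip x y hxmem hymem hsaddle
end

section
/- (Follow-the-Leader saddle-point stability, lower bound.) Let L_1, ..., L_T : X × Y → ℝ be convex-concave functions on compact convex sets, each G-Lipschitz with respect to a norm ‖·‖ on the product, and for each t let (x_{t+1}, y_{t+1}) be a saddle point of Σ_{τ=1}^{t} L_τ. Then min_{x∈X} max_{y∈Y} Σ_{t=1}^T L_t(x, y) − Σ_{t=1}^T L_t(x_{t+1}, y_{t+1}) ≤ G·Σ_{t=1}^T ‖x_t − x_{t+1}‖. -/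
open Finset

/-! Since `(x_T, y_T)` is a saddle point of the total loss, the minimax value equals the total
loss at `(x_T, y_T)`. A be-the-leader induction compares this with the FTL losses: passing from
`(x_n, y_n)` to `(x_{n+1}, y_{n+1})` costs at most `L_n(x_n, y_{n+1}) - L_n(x_{n+1}, y_{n+1})`,
which the Lipschitz bound controls by `G ‖x_n - x_{n+1}‖`. -/

lemma le_add_mul_norm_sub_of_abs_sub_le {E F : Type*} [SeminormedAddGroup E]
    [SeminormedAddGroup F] {f : E → F → ℝ} {X : Set E} {Y : Set F} {G : ℝ}
    (hf : ∀ x1 ∈ X, ∀ y1 ∈ Y, ∀ x2 ∈ X, ∀ y2 ∈ Y,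
      |f x1 y1 - f x2 y2| ≤ G * ‖((x1 - x2 : E), (y1 - y2 : F))‖)
    {x1 x2 : E} {y : F} (hx1 : x1 ∈ X) (hx2 : x2 ∈ X) (hy : y ∈ Y) :
    f x1 y ≤ f x2 y + G * ‖x1 - x2‖ := by
  have h := hf x1 hx1 y hy x2 hx2 y hy
  rw [sub_self, Prod.norm_mk, norm_zero, max_eq_left (norm_nonneg _)] at h
  linarith [le_abs_self (f x1 y - f x2 y)]

/-- The bound on `f x - f a` keeps `sSup (f x '' Y)` from taking the junk value of an unbounded
set. -/
theorem IsSaddlePointOn.sInf_image_sSup_image_eq {α β γ : Type*}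
    [ConditionallyCompleteLinearOrder γ] [AddCommMonoid γ] [IsOrderedAddMonoid γ]
    {X : Set α} {Y : Set β} {f : α → β → γ} {a : α} {b : β}
    (hsaddle : IsSaddlePointOn X Y f a b) (ha : a ∈ X) (hb : b ∈ Y)
    (hbdd : ∀ x ∈ X, ∃ C, ∀ y ∈ Y, f x y ≤ f a y + C) :
    sInf ((fun x => sSup (f x '' Y)) '' X) = f a b := by
  have hbddAbove : ∀ x ∈ X, BddAbove (f x '' Y) := by
    intro x hx
    obtain ⟨C, hC⟩ := hbdd x hx
    refine ⟨f a b + C, ?_⟩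
    rintro _ ⟨y, hy, rfl⟩
    exact (hC y hy).trans (add_le_add_left (hsaddle a ha y hy) C)
  have hsup_a : sSup (f a '' Y) = f a b :=
    IsGreatest.csSup_eq ⟨⟨b, hb, rfl⟩, by rintro _ ⟨y, hy, rfl⟩; exact hsaddle a ha y hy⟩
  refine IsLeast.csInf_eq ⟨⟨a, ha, hsup_a⟩, ?_⟩
  rintro _ ⟨x, hx, rfl⟩
  exact (hsaddle x hx b hb).trans (le_csSup (hbddAbove x hx) ⟨b, hb, rfl⟩)

theorem sum_le_sum_leader_add_of_isSaddlePointOn {α β : Type*} {X : Set α} {Y : Set β}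
    {L : ℕ → α → β → ℝ} {x : ℕ → α} {y : ℕ → β} {δ : ℕ → ℝ} {T : ℕ}
    (hxmem : ∀ t, x t ∈ X) (hymem : ∀ t, y t ∈ Y)
    (hsaddle : ∀ t < T,
      IsSaddlePointOn X Y (fun a b => ∑ τ ∈ range (t + 1), L τ a b) (x (t + 1)) (y (t + 1)))
    (hstep : ∀ t < T, L t (x t) (y (t + 1)) ≤ L t (x (t + 1)) (y (t + 1)) + δ t) :
    ∑ t ∈ range T, L t (x T) (y T) ≤
      ∑ t ∈ range T, L t (x (t + 1)) (y (t + 1)) + ∑ t ∈ range T, δ t := by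
  induction T with
  | zero => simp
  | succ n ih =>
    have ih := ih (fun t ht => hsaddle t (by omega)) (fun t ht => hstep t (by omega))
    -- `y n` is a best response to `x n` for the first `n` losses
    have hbest : ∑ t ∈ range n, L t (x n) (y (n + 1)) ≤ ∑ t ∈ range n, L t (x n) (y n) := by
      cases n with
      | zero => simp
      | succ m => exact hsaddle m (by omega) _ (hxmem _) _ (hymem _)
    calc ∑ t ∈ range (n + 1), L t (x (n + 1)) (y (n + 1))
        ≤ ∑ t ∈ range (n + 1), L t (x n) (y (n + 1)) :=
          hsaddle n n.lt_succ_self _ (hxmem n) _ (hymem _)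
      _ = ∑ t ∈ range n, L t (x n) (y (n + 1)) + L n (x n) (y (n + 1)) := sum_range_succ _ _
      _ ≤ ∑ t ∈ range n, L t (x n) (y n) + (L n (x (n + 1)) (y (n + 1)) + δ n) :=
          add_le_add hbest (hstep n n.lt_succ_self)
      _ ≤ ∑ t ∈ range (n + 1), L t (x (t + 1)) (y (t + 1)) + ∑ t ∈ range (n + 1), δ t := by
          rw [sum_range_succ, sum_range_succ δ]
          linarith

theorem ftl_saddle_stability_lower_general
    {E F : Type*} [NormedAddCommGroup E] [NormedAddCommGroup F]
    (X : Set E) (Y : Set F)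
    (T : ℕ) (G : ℝ)
    (L : ℕ → E → F → ℝ)
    (hLip : ∀ t, ∀ x1 ∈ X, ∀ y1 ∈ Y, ∀ x2 ∈ X, ∀ y2 ∈ Y,
      |L t x1 y1 - L t x2 y2| ≤ G * ‖((x1 - x2 : E), (y1 - y2 : F))‖)
    (x : ℕ → E) (y : ℕ → F)
    (hxmem : ∀ t, x t ∈ X) (hymem : ∀ t, y t ∈ Y)
    -- `(x (t+1), y (t+1))` is a saddle point of `∑_{τ ≤ t} L τ`
    (hsaddle : ∀ t < T, ∀ x' ∈ X, ∀ y' ∈ Y,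
      (∑ τ ∈ range (t + 1), L τ (x (t + 1)) y') ≤ ∑ τ ∈ range (t + 1), L τ (x (t + 1)) (y (t + 1)) ∧
      (∑ τ ∈ range (t + 1), L τ (x (t + 1)) (y (t + 1))) ≤ ∑ τ ∈ range (t + 1), L τ x' (y (t + 1))) :
    sInf ((fun x' => sSup ((fun y' => ∑ t ∈ range T, L t x' y') '' Y)) '' X) -
      (∑ t ∈ range T, L t (x (t + 1)) (y (t + 1))) ≤
      G * ∑ t ∈ range T, ‖x t - x (t + 1)‖ := by
  have hsaddle' : ∀ t < T,
      IsSaddlePointOn X Y (fun a b => ∑ τ ∈ range (t + 1), L τ a b) (x (t + 1)) (y (t + 1)) :=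
    fun t ht a ha b hb => (hsaddle t ht a ha b hb).1.trans (hsaddle t ht a ha b hb).2
  have hsaddleT :
      IsSaddlePointOn X Y (fun a b => ∑ t ∈ range T, L t a b) (x T) (y T) := by
    cases T with
    | zero => simp [IsSaddlePointOn]
    | succ n => exact hsaddle' n n.lt_succ_self
  have hminimax := hsaddleT.sInf_image_sSup_image_eq (hxmem T) (hymem T) fun a ha =>
    ⟨∑ t ∈ range T, G * ‖a - x T‖, fun b hb => by
      rw [← sum_add_distrib]
      exact sum_le_sum fun t _ =>
        le_add_mul_norm_sub_of_abs_sub_le (hLip t) ha (hxmem T) hb⟩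
  have hleader := sum_le_sum_leader_add_of_isSaddlePointOn hxmem hymem hsaddle'
    fun t _ => le_add_mul_norm_sub_of_abs_sub_le (hLip t) (hxmem t) (hxmem (t + 1)) (hymem (t + 1))
  rw [hminimax, mul_sum]
  linarith

/-- Follow-the-Leader saddle-point stability, lower bound. If `(x_{t+1}, y_{t+1})`
is a saddle point of the partial sum `∑_{τ≤t} L_τ`, then the minimax value of the total sum
exceeds the cumulative FTL value by at most `G ∑ₜ ‖xₜ − x_{t+1}‖`. -/
theorem ftl_saddle_stability_lower
    {E F : Type*} [NormedAddCommGroup E] [NormedSpace ℝ E]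
    [NormedAddCommGroup F] [NormedSpace ℝ F]
    (X : Set E) (Y : Set F)
    (hXc : IsCompact X) (hXconv : Convex ℝ X) (hXne : X.Nonempty)
    (hYc : IsCompact Y) (hYconv : Convex ℝ Y) (hYne : Y.Nonempty)
    (T : ℕ) (G : ℝ)
    (L : ℕ → E → F → ℝ)
    (hconv : ∀ t, ∀ y ∈ Y, ConvexOn ℝ X (fun x => L t x y))
    (hconc : ∀ t, ∀ x ∈ X, ConcaveOn ℝ Y (fun y => L t x y))
    (hLip : ∀ t, ∀ x1 ∈ X, ∀ y1 ∈ Y, ∀ x2 ∈ X, ∀ y2 ∈ Y,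
      |L t x1 y1 - L t x2 y2| ≤ G * ‖((x1 - x2 : E), (y1 - y2 : F))‖)
    (x : ℕ → E) (y : ℕ → F)
    (hxmem : ∀ t, x t ∈ X) (hymem : ∀ t, y t ∈ Y)
    -- `(x (t+1), y (t+1))` is a saddle point of `∑_{τ ≤ t} L τ`
    (hsaddle : ∀ t < T, ∀ x' ∈ X, ∀ y' ∈ Y,
      (∑ τ ∈ range (t + 1), L τ (x (t + 1)) y') ≤ ∑ τ ∈ range (t + 1), L τ (x (t + 1)) (y (t + 1)) ∧
      (∑ τ ∈ range (t + 1), L τ (x (t + 1)) (y (t + 1))) ≤ ∑ τ ∈ range (t + 1), L τ x' (y (t + 1))) :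
    sInf ((fun x' => sSup ((fun y' => ∑ t ∈ range T, L t x' y') '' Y)) '' X) -
      (∑ t ∈ range T, L t (x (t + 1)) (y (t + 1))) ≤
      G * ∑ t ∈ range T, ‖x t - x (t + 1)‖ :=
  ftl_saddle_stability_lower_general X Y T G L hLip x y hxmem hymem hsaddle
end

section
/- (Impossibility of simultaneous NE-regret and individual-regret minimization.) For any deterministic algorithm that maps histories A_1, ..., A_{t−1} of 2×2 payoff matrices with entries in [−1,1] to strategy pairs (x_t, y_t) ∈ Δ_2 × Δ_2, there exists a sequence A_1, A_2, ... of matrices with entries in [−1,1] such that not all three of the following hold: (i) |Σ_{t=1}^T x_tᵀA_t y_t − min_{x∈Δ_2} max_{y∈Δ_2} Σ_{t=1}^T xᵀA_t y| = o(T); (ii) Σ_{t=1}^T x_tᵀA_t y_t − min_{x∈Δ_2} Σ_{t=1}^T xᵀA_t y_t = o(T); (iii) max_{y∈Δ_2} Σ_{t=1}^T x_tᵀA_t y − Σ_{t=1}^T x_tᵀA_t y_t = o(T). -/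
/-!
The adversary ignores the algorithm. With `n = 11 ^ k` and `L = 5 n` it plays matching pennies
on `[n, n + L)` and `[[1, -1], [1, -1]]` on `[n + L, n + 2L)`. Let `d` be the total weight the row
player puts on row `1` minus row `0` during the first phase. The prefix contributes at most `n`
to anything, so:
* at time `n + L`, the uniform row strategy shows that the minimax value is `≤ n`, while the
  column player's best response (column `1`) earns `≥ d - n`;
* at time `n + 2L`, row `1` earns `0` against every column over both phases, so the minimax value
  is again `≤ n`, while column `0` earns `≥ L - d - n`.
Adding up, at one of the two times the column player's best response exceeds the minimax value
by at least `(L - 4n) / 2 = n / 2`, a fixed fraction of the horizon; but NE regret and column regret both `o(T)`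
would make this excess `o(T)`.
-/

open Finset Filter

noncomputable section

section BilinearGame

variable {ι κ : Type*} [Fintype ι] [Fintype κ]

def payoff (A : ι → κ → ℝ) (x : ι → ℝ) (y : κ → ℝ) : ℝ :=
  ∑ i, ∑ j, x i * A i j * y j

theorem abs_payoff_le_one {A : ι → κ → ℝ} {x : ι → ℝ} {y : κ → ℝ} (hA : ∀ i j, |A i j| ≤ 1)
    (hx : x ∈ stdSimplex ℝ ι) (hy : y ∈ stdSimplex ℝ κ) : |payoff A x y| ≤ 1 :=
  calc |payoff A x y| ≤ ∑ i, ∑ j, |x i * A i j * y j| :=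
        (abs_sum_le_sum_abs _ _).trans (sum_le_sum fun i _ => abs_sum_le_sum_abs _ _)
    _ ≤ ∑ i, ∑ j, x i * y j := by
        gcongr with i _ j _
        rw [abs_mul, abs_mul, abs_of_nonneg (hx.1 i), abs_of_nonneg (hy.1 j)]
        exact mul_le_mul_of_nonneg_right (mul_le_of_le_one_right (hx.1 i) (hA i j)) (hy.1 j)
    _ = 1 := by rw [← sum_mul_sum, hx.2, hy.2, one_mul]

theorem abs_sum_range_payoff_le {A : ℕ → ι → κ → ℝ} {x : ℕ → ι → ℝ} {y : ℕ → κ → ℝ}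
    (hA : ∀ t i j, |A t i j| ≤ 1) (hx : ∀ t, x t ∈ stdSimplex ℝ ι)
    (hy : ∀ t, y t ∈ stdSimplex ℝ κ) (T : ℕ) :
    |∑ t ∈ range T, payoff (A t) (x t) (y t)| ≤ T :=
  calc |∑ t ∈ range T, payoff (A t) (x t) (y t)|
      ≤ ∑ t ∈ range T, |payoff (A t) (x t) (y t)| := abs_sum_le_sum_abs _ _
    _ ≤ ∑ _t ∈ range T, (1 : ℝ) := sum_le_sum fun t _ => abs_payoff_le_one (hA t) (hx t) (hy t)
    _ = T := by simp

theorem sum_payoff_of_forall_eq {A : ℕ → ι → κ → ℝ} {M : ι → κ → ℝ} {s : Finset ℕ}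
    (h : ∀ t ∈ s, A t = M) (x : ℕ → ι → ℝ) (y : ℕ → κ → ℝ) :
    ∑ t ∈ s, payoff (A t) (x t) (y t) = ∑ t ∈ s, payoff M (x t) (y t) :=
  sum_congr rfl fun t ht => by rw [h t ht]

variable (A : ℕ → ι → κ → ℝ)

def minimaxValue (T : ℕ) : ℝ :=
  sInf ((fun x' => sSup ((fun y' => ∑ t ∈ range T, payoff (A t) x' y') '' stdSimplex ℝ κ))
    '' stdSimplex ℝ ι)

def bestResponseValue (x : ℕ → ι → ℝ) (T : ℕ) : ℝ :=
  sSup ((fun y' => ∑ t ∈ range T, payoff (A t) (x t) y') '' stdSimplex ℝ κ)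

variable {A}

theorem sum_payoff_le_bestResponseValue (hA : ∀ t i j, |A t i j| ≤ 1) {x : ℕ → ι → ℝ}
    (hx : ∀ t, x t ∈ stdSimplex ℝ ι) {y : κ → ℝ} (hy : y ∈ stdSimplex ℝ κ) (T : ℕ) :
    ∑ t ∈ range T, payoff (A t) (x t) y ≤ bestResponseValue A x T := by
  refine le_csSup ⟨T, ?_⟩ ⟨y, hy, rfl⟩
  rintro _ ⟨y', hy', rfl⟩
  exact (abs_le.1 (abs_sum_range_payoff_le hA hx (fun _ => hy') T)).2

theorem minimaxValue_le [Nonempty κ] (hA : ∀ t i j, |A t i j| ≤ 1) {T : ℕ} {x₀ : ι → ℝ}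
    (hx₀ : x₀ ∈ stdSimplex ℝ ι) {c : ℝ}
    (hc : ∀ y ∈ stdSimplex ℝ κ, ∑ t ∈ range T, payoff (A t) x₀ y ≤ c) :
    minimaxValue A T ≤ c := by
  obtain ⟨y₀, hy₀⟩ : Nonempty (stdSimplex ℝ κ) := inferInstance
  unfold minimaxValue
  refine le_trans (csInf_le ⟨-(T : ℝ), ?_⟩ ⟨x₀, hx₀, rfl⟩) (csSup_le ⟨_, y₀, hy₀, rfl⟩ ?_)
  · rintro _ ⟨x', hx', rfl⟩
    have hsum := abs_sum_range_payoff_le hA (fun _ => hx') (fun _ => hy₀) T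
    exact (abs_le.1 hsum).1.trans (sum_payoff_le_bestResponseValue hA (fun _ => hx') hy₀ T)
  · rintro _ ⟨y, hy, rfl⟩
    exact hc y hy

end BilinearGame

def matchingPennies : Fin 2 → Fin 2 → ℝ := fun i j => if i = j then 1 else -1

def columnBias : Fin 2 → Fin 2 → ℝ := fun _ j => if j = 0 then 1 else -1

theorem payoff_fin_two (A : Fin 2 → Fin 2 → ℝ) (x y : Fin 2 → ℝ) :
    payoff A x y = x 0 * A 0 0 * y 0 + x 0 * A 0 1 * y 1 + x 1 * A 1 0 * y 0 + x 1 * A 1 1 * y 1 := by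
  simp only [payoff, Fin.sum_univ_two]
  ring

theorem payoff_matchingPennies_half_left (y : Fin 2 → ℝ) :
    payoff matchingPennies (fun _ => 1 / 2) y = 0 := by
  simp [payoff_fin_two, matchingPennies]

theorem payoff_matchingPennies_single_one_left (y : Fin 2 → ℝ) :
    payoff matchingPennies (Pi.single 1 1) y = y 1 - y 0 := by
  simp [payoff_fin_two, matchingPennies]
  ring

theorem payoff_columnBias_single_one_left (y : Fin 2 → ℝ) :
    payoff columnBias (Pi.single 1 1) y = y 0 - y 1 := by
  simp [payoff_fin_two, columnBias]
  ring

theorem payoff_matchingPennies_single_zero_right (x : Fin 2 → ℝ) :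
    payoff matchingPennies x (Pi.single 0 1) = x 0 - x 1 := by
  simp [payoff_fin_two, matchingPennies]
  ring

theorem payoff_matchingPennies_single_one_right (x : Fin 2 → ℝ) :
    payoff matchingPennies x (Pi.single 1 1) = x 1 - x 0 := by
  simp [payoff_fin_two, matchingPennies]
  ring

theorem payoff_columnBias_single_zero_right {x : Fin 2 → ℝ} (hx : x ∈ stdSimplex ℝ (Fin 2)) :
    payoff columnBias x (Pi.single 0 1) = 1 := by
  simpa [payoff_fin_two, columnBias, Fin.sum_univ_two] using hx.2

section Phases

variable {A : ℕ → Fin 2 → Fin 2 → ℝ} {n L : ℕ}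

theorem minimaxValue_le_of_matchingPennies (hA : ∀ t i j, |A t i j| ≤ 1)
    (hMP : ∀ t ∈ Ico n (n + L), A t = matchingPennies) : minimaxValue A (n + L) ≤ n := by
  have hhalf : (fun _ => 1 / 2 : Fin 2 → ℝ) ∈ stdSimplex ℝ (Fin 2) :=
    ⟨fun _ => by norm_num, by simp⟩
  refine minimaxValue_le hA hhalf fun y hy => ?_
  rw [← sum_range_add_sum_Ico _ (n.le_add_right L), sum_payoff_of_forall_eq hMP]
  simp only [payoff_matchingPennies_half_left, sum_const_zero, add_zero]
  exact (abs_le.1 (abs_sum_range_payoff_le hA (fun _ => hhalf) (fun _ => hy) n)).2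

theorem minimaxValue_le_of_phases (hA : ∀ t i j, |A t i j| ≤ 1)
    (hMP : ∀ t ∈ Ico n (n + L), A t = matchingPennies)
    (hCB : ∀ t ∈ Ico (n + L) (n + L + L), A t = columnBias) :
    minimaxValue A (n + L + L) ≤ n := by
  refine minimaxValue_le hA (single_mem_stdSimplex ℝ 1) fun y hy => ?_
  rw [← sum_range_add_sum_Ico _ (by omega : n + L ≤ n + L + L),
    ← sum_range_add_sum_Ico _ (n.le_add_right L), sum_payoff_of_forall_eq hMP,
    sum_payoff_of_forall_eq hCB]
  simp only [payoff_matchingPennies_single_one_left, payoff_columnBias_single_one_left, sum_const,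
    Nat.card_Ico, Nat.add_sub_cancel_left, nsmul_eq_mul]
  have hpre := (abs_le.1 (abs_sum_range_payoff_le hA (fun _ => single_mem_stdSimplex ℝ 1)
    (fun _ => hy) n)).2
  linarith

theorem le_bestResponseValue_sub_minimaxValue {x : ℕ → Fin 2 → ℝ} (hA : ∀ t i j, |A t i j| ≤ 1)
    (hx : ∀ t, x t ∈ stdSimplex ℝ (Fin 2)) (hMP : ∀ t ∈ Ico n (n + L), A t = matchingPennies)
    (hCB : ∀ t ∈ Ico (n + L) (n + L + L), A t = columnBias) :
    (L : ℝ) ≤ 4 * n + (bestResponseValue A x (n + L) - minimaxValue A (n + L))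
      + (bestResponseValue A x (n + L + L) - minimaxValue A (n + L + L)) := by
  have hcol₁ := sum_payoff_le_bestResponseValue hA hx (single_mem_stdSimplex ℝ 1) (n + L)
  have hcol₀ := sum_payoff_le_bestResponseValue hA hx (single_mem_stdSimplex ℝ 0) (n + L + L)
  rw [← sum_range_add_sum_Ico _ (n.le_add_right L), sum_payoff_of_forall_eq hMP] at hcol₁
  rw [← sum_range_add_sum_Ico _ (by omega : n + L ≤ n + L + L),
    ← sum_range_add_sum_Ico _ (n.le_add_right L), sum_payoff_of_forall_eq hMP,
    sum_payoff_of_forall_eq hCB] at hcol₀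
  simp only [payoff_matchingPennies_single_one_right, payoff_matchingPennies_single_zero_right,
    payoff_columnBias_single_zero_right (hx _), sum_sub_distrib, sum_const, Nat.card_Ico,
    Nat.add_sub_cancel_left, nsmul_eq_mul, mul_one] at hcol₁ hcol₀
  have hpre₁ := (abs_le.1 (abs_sum_range_payoff_le hA hx
    (fun _ => single_mem_stdSimplex ℝ 1) n)).1
  have hpre₀ := (abs_le.1 (abs_sum_range_payoff_le hA hx
    (fun _ => single_mem_stdSimplex ℝ 0) n)).1
  linarith [minimaxValue_le_of_matchingPennies hA hMP, minimaxValue_le_of_phases hA hMP hCB]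

end Phases

theorem eventually_le_mul_of_tendsto_div {f : ℕ → ℝ}
    (hf : Tendsto (fun T : ℕ => f T / T) atTop (nhds 0)) {c : ℝ} (hc : 0 < c) :
    ∀ᶠ T : ℕ in atTop, f T ≤ c * T := by
  filter_upwards [(tendsto_order.1 hf).2 c hc, eventually_gt_atTop 0] with T hT hT₀
  exact (div_le_iff₀ (Nat.cast_pos.2 hT₀)).1 hT.le

def adversary (t : ℕ) : Fin 2 → Fin 2 → ℝ :=
  if t < 6 * 11 ^ Nat.log 11 t then matchingPennies else columnBias

theorem abs_adversary_le_one (t : ℕ) (i j : Fin 2) : |adversary t i j| ≤ 1 := by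
  unfold adversary
  split_ifs <;> simp only [matchingPennies, columnBias] <;> split_ifs <;> norm_num

theorem adversary_of_mem_Ico {k t : ℕ} (ht : t ∈ Ico (11 ^ k) (11 ^ (k + 1))) :
    adversary t = if t < 6 * 11 ^ k then matchingPennies else columnBias := by
  rw [adversary, Nat.log_eq_of_pow_le_of_lt_pow (mem_Ico.1 ht).1 (mem_Ico.1 ht).2]

theorem adversary_eq_matchingPennies (k : ℕ) :
    ∀ t ∈ Ico (11 ^ k) (11 ^ k + 5 * 11 ^ k), adversary t = matchingPennies := fun t ht => by
  have ht' := mem_Ico.1 ht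
  rw [adversary_of_mem_Ico (mem_Ico.2 ⟨ht'.1, by rw [pow_succ]; omega⟩), if_pos (by omega)]

theorem adversary_eq_columnBias (k : ℕ) :
    ∀ t ∈ Ico (11 ^ k + 5 * 11 ^ k) (11 ^ k + 5 * 11 ^ k + 5 * 11 ^ k),
      adversary t = columnBias := fun t ht => by
  have ht' := mem_Ico.1 ht
  rw [adversary_of_mem_Ico (k := k) (mem_Ico.2 ⟨by omega, by rw [pow_succ]; omega⟩), if_neg (by omega)]

theorem adversary_not_sublinear {x : ℕ → Fin 2 → ℝ} (hx : ∀ t, x t ∈ stdSimplex ℝ (Fin 2))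
    (P : ℕ → ℝ) :
    ¬ (Tendsto (fun T : ℕ => |P T - minimaxValue adversary T| / T) atTop (nhds 0) ∧
      Tendsto (fun T : ℕ => (bestResponseValue adversary x T - P T) / T) atTop (nhds 0)) := by
  rintro ⟨hNE, hBR⟩
  obtain ⟨N, hN⟩ := eventually_atTop.1 ((eventually_le_mul_of_tendsto_div hNE
    (by norm_num : (0 : ℝ) < 1 / 40)).and (eventually_le_mul_of_tendsto_div hBR
    (by norm_num : (0 : ℝ) < 1 / 40)))
  have hgap : ∀ T ≥ N, bestResponseValue adversary x T - minimaxValue adversary T ≤ T / 20 := by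
    intro T hT
    linarith [hN T hT, le_abs_self (P T - minimaxValue adversary T)]
  have hN₁₁ : N ≤ 11 ^ N := (Nat.lt_pow_self (by norm_num)).le
  have hphases := le_bestResponseValue_sub_minimaxValue (fun t => abs_adversary_le_one t) hx
    (adversary_eq_matchingPennies N) (adversary_eq_columnBias N)
  have hgap₁ := hgap (11 ^ N + 5 * 11 ^ N) (by omega)
  have hgap₂ := hgap (11 ^ N + 5 * 11 ^ N + 5 * 11 ^ N) (by omega)
  have hpos : (0 : ℝ) < 11 ^ N := by positivity
  push_cast at hphases hgap₁ hgap₂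
  linarith

/-- Impossibility of simultaneously achieving sublinear NE regret and
sublinear individual regret for both players. For any deterministic algorithm mapping
histories of `2×2` payoff matrices (entries in `[−1,1]`) to strategy pairs in `Δ₂ × Δ₂`,
there is an adversarial sequence of payoff matrices (entries in `[−1,1]`) on which not all
three regret quantities are `o(T)`. -/
theorem omg_impossibility
    (alg : List (Fin 2 → Fin 2 → ℝ) → (Fin 2 → ℝ) × (Fin 2 → ℝ))
    (halg : ∀ h : List (Fin 2 → Fin 2 → ℝ),
      (alg h).1 ∈ stdSimplex ℝ (Fin 2) ∧ (alg h).2 ∈ stdSimplex ℝ (Fin 2)) :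
    ∃ A : ℕ → Fin 2 → Fin 2 → ℝ,
      (∀ t i j, |A t i j| ≤ 1) ∧
      (let x : ℕ → Fin 2 → ℝ := fun t => (alg ((List.range t).map A)).1
       let y : ℕ → Fin 2 → ℝ := fun t => (alg ((List.range t).map A)).2
       let pay : ℕ → ℝ := fun T => ∑ t ∈ range T, ∑ i, ∑ j, x t i * A t i j * y t j
       let minimax : ℕ → ℝ := fun T =>
         sInf ((fun x' => sSup ((fun y' => ∑ t ∈ range T, ∑ i, ∑ j, x' i * A t i j * y' j)
             '' stdSimplex ℝ (Fin 2))) '' stdSimplex ℝ (Fin 2))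
       let reg1 : ℕ → ℝ := fun T =>
         pay T - sInf ((fun x' => ∑ t ∈ range T, ∑ i, ∑ j, x' i * A t i j * y t j)
             '' stdSimplex ℝ (Fin 2))
       let reg2 : ℕ → ℝ := fun T =>
         sSup ((fun y' => ∑ t ∈ range T, ∑ i, ∑ j, x t i * A t i j * y' j)
             '' stdSimplex ℝ (Fin 2)) - pay T
       ¬ (Tendsto (fun T : ℕ => |pay T - minimax T| / T) atTop (nhds 0) ∧
          Tendsto (fun T : ℕ => reg1 T / T) atTop (nhds 0) ∧
          Tendsto (fun T : ℕ => reg2 T / T) atTop (nhds 0))) := by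
  refine ⟨adversary, abs_adversary_le_one, ?_⟩
  intro x y pay minimax reg1 reg2
  rintro ⟨hNE, -, hreg₂⟩
  exact adversary_not_sublinear (fun t => (halg _).1) pay ⟨hNE, hreg₂⟩
end
end

section
/- In the impossibility construction with A_t = [[1,−1],[−1,1]] for 1 ≤ t ≤ T/2 and A_t = [[1,−1],[1,−1]] for T/2 < t ≤ T, with x_t = [α_t; 1−α_t]: max_{y∈Δ_2} Σ_{t=1}^T x_tᵀA_t y = max{ Σ_{t=1}^{T/2}(2α_t−1) + T/2, Σ_{t=1}^{T/2}(1−2α_t) − T/2 } and min_{x∈Δ_2} max_{y∈Δ_2} Σ_{t=1}^T xᵀA_t y = 0. Consequently max_{y} Σ_t x_tᵀA_t y ≥ T/2 + Σ_{t=1}^{T/2}(2α_t − 1). -/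
/-! The total payoff is linear in `y`, so its maximum over the simplex is the larger of the two
column totals. Once every `x t` sums to `1`, these totals are `c` and `-c` with
`c = ∑_{t<m} (x t 0 - x t 1) + m`, so the best-response value is `|c|`. This gives the first
claim; for a constant strategy `x'` the value `|c|` vanishes at `x' = (0, 1)`, whence the
minimax value `0`. -/

open Finset

section StdSimplex

variable {ι : Type*} [Fintype ι] [DecidableEq ι] [Nonempty ι]

theorem isGreatest_image_stdSimplex_sum_mul (c : ι → ℝ) :
    IsGreatest ((fun y => ∑ j, c j * y j) '' stdSimplex ℝ ι) (univ.sup' univ_nonempty c) := by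
  refine ⟨?_, ?_⟩
  · obtain ⟨j, -, hj⟩ := exists_mem_eq_sup' univ_nonempty c
    exact ⟨Pi.single j 1, single_mem_stdSimplex ℝ j, by simp [hj, Pi.single_apply]⟩
  · rintro _ ⟨y, ⟨hy0, hy1⟩, rfl⟩
    calc ∑ j, c j * y j ≤ ∑ j, univ.sup' univ_nonempty c * y j :=
          sum_le_sum fun j hj => mul_le_mul_of_nonneg_right (le_sup' c hj) (hy0 j)
      _ = univ.sup' univ_nonempty c := by rw [← mul_sum, hy1, mul_one]

theorem sSup_image_stdSimplex_sum_mul (c : ι → ℝ) :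
    sSup ((fun y => ∑ j, c j * y j) '' stdSimplex ℝ ι) = univ.sup' univ_nonempty c :=
  (isGreatest_image_stdSimplex_sum_mul c).csSup_eq

end StdSimplex

theorem sSup_image_stdSimplex_fin_two (c : Fin 2 → ℝ) :
    sSup ((fun y => ∑ j, c j * y j) '' stdSimplex ℝ (Fin 2)) = max (c 0) (c 1) := by
  rw [sSup_image_stdSimplex_sum_mul]
  simp [Fin.univ_succ]

theorem sum_sum_sum_mul_eq_sum_mul {ι κ τ : Type*} [Fintype ι] [Fintype κ] (s : Finset τ)
    (x : τ → ι → ℝ) (A : τ → ι → κ → ℝ) (y : κ → ℝ) :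
    ∑ t ∈ s, ∑ i, ∑ j, x t i * A t i j * y j = ∑ j, (∑ t ∈ s, ∑ i, x t i * A t i j) * y j := by
  simp only [sum_mul]
  exact (sum_congr rfl fun t _ => sum_comm).trans sum_comm

def scenarioTwoGame (m t : ℕ) : Fin 2 → Fin 2 → ℝ := fun i j =>
  if t < m then (if i = j then (1 : ℝ) else -1) else (if j = 0 then 1 else -1)

theorem sum_scenarioTwoGame_col_zero (m : ℕ) (x : ℕ → Fin 2 → ℝ) (hx : ∀ t, x t 0 + x t 1 = 1) :
    ∑ t ∈ range (2 * m), ∑ i, x t i * scenarioTwoGame m t i 0 =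
      ∑ t ∈ range m, (x t 0 - x t 1) + m := by
  rw [← sum_range_add_sum_Ico _ (by omega : m ≤ 2 * m)]
  congr 1
  · refine sum_congr rfl fun t ht => ?_
    simp [scenarioTwoGame, mem_range.mp ht, Fin.sum_univ_two, sub_eq_add_neg]
  · have hlate : ∀ t ∈ Ico m (2 * m), ∑ i, x t i * scenarioTwoGame m t i 0 = 1 := fun t ht => by
      simp [scenarioTwoGame, (mem_Ico.mp ht).1.not_gt, Fin.sum_univ_two, hx]
    rw [sum_congr rfl hlate]
    simp
    omega

theorem sum_scenarioTwoGame_col_one (m : ℕ) (x : ℕ → Fin 2 → ℝ) (hx : ∀ t, x t 0 + x t 1 = 1) :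
    ∑ t ∈ range (2 * m), ∑ i, x t i * scenarioTwoGame m t i 1 =
      -(∑ t ∈ range m, (x t 0 - x t 1) + m) := by
  rw [← sum_scenarioTwoGame_col_zero m x hx, ← sum_neg_distrib]
  refine sum_congr rfl fun t _ => ?_
  by_cases ht : t < m <;> simp [scenarioTwoGame, ht, Fin.sum_univ_two, add_comm]

theorem sSup_payoff_scenarioTwoGame (m : ℕ) (x : ℕ → Fin 2 → ℝ) (hx : ∀ t, x t 0 + x t 1 = 1) :
    sSup ((fun y => ∑ t ∈ range (2 * m), ∑ i, ∑ j, x t i * scenarioTwoGame m t i j * y j)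
        '' stdSimplex ℝ (Fin 2)) = |∑ t ∈ range m, (x t 0 - x t 1) + m| := by
  simp_rw [sum_sum_sum_mul_eq_sum_mul]
  rw [sSup_image_stdSimplex_fin_two, sum_scenarioTwoGame_col_zero m x hx,
    sum_scenarioTwoGame_col_one m x hx, abs_eq_max_neg]

theorem impossibility_scenario_two_general (m : ℕ)
    (α : ℕ → ℝ)
    (A : ℕ → Fin 2 → Fin 2 → ℝ)
    (hA : ∀ t, A t = fun i j =>
      if t < m then (if i = j then (1 : ℝ) else -1) else (if j = 0 then 1 else -1))
    (x : ℕ → Fin 2 → ℝ)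
    (hx : ∀ t, x t = fun i => if i = 0 then α t else 1 - α t) :
    sSup ((fun y => ∑ t ∈ range (2 * m), ∑ i, ∑ j, x t i * A t i j * y j)
        '' stdSimplex ℝ (Fin 2)) =
      max ((∑ t ∈ range m, (2 * α t - 1)) + m) ((∑ t ∈ range m, (1 - 2 * α t)) - m) ∧
    sInf ((fun x' => sSup ((fun y => ∑ t ∈ range (2 * m), ∑ i, ∑ j, x' i * A t i j * y j)
        '' stdSimplex ℝ (Fin 2))) '' stdSimplex ℝ (Fin 2)) = 0 ∧
    (m : ℝ) + (∑ t ∈ range m, (2 * α t - 1)) ≤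
      sSup ((fun y => ∑ t ∈ range (2 * m), ∑ i, ∑ j, x t i * A t i j * y j)
        '' stdSimplex ℝ (Fin 2)) := by
  obtain rfl : A = scenarioTwoGame m := funext hA
  have best_response : sSup ((fun y => ∑ t ∈ range (2 * m), ∑ i, ∑ j,
      x t i * scenarioTwoGame m t i j * y j) '' stdSimplex ℝ (Fin 2)) =
      max ((∑ t ∈ range m, (2 * α t - 1)) + m) ((∑ t ∈ range m, (1 - 2 * α t)) - m) := by
    rw [sSup_payoff_scenarioTwoGame m x (fun t => by simp [hx]), abs_eq_max_neg]
    have h_rounds : ∑ t ∈ range m, (x t 0 - x t 1) = ∑ t ∈ range m, (2 * α t - 1) :=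
      sum_congr rfl fun t _ => by simp [hx]; ring
    rw [h_rounds]
    congr 1
    simp [sum_sub_distrib, ← mul_sum]
  have value_nonneg : ∀ x' ∈ stdSimplex ℝ (Fin 2), 0 ≤ sSup ((fun y => ∑ t ∈ range (2 * m),
      ∑ i, ∑ j, x' i * scenarioTwoGame m t i j * y j) '' stdSimplex ℝ (Fin 2)) :=
    fun x' hx' => (abs_nonneg _).trans_eq (sSup_payoff_scenarioTwoGame m (fun _ => x')
      (fun _ => by simpa [Fin.sum_univ_two] using hx'.2)).symm
  refine ⟨best_response, IsLeast.csInf_eq ⟨⟨Pi.single 1 1, single_mem_stdSimplex ℝ 1, ?_⟩, ?_⟩, ?_⟩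
  · exact (sSup_payoff_scenarioTwoGame m (fun _ => Pi.single 1 1) (fun _ => by simp)).trans
      (by simp)
  · rintro _ ⟨x', hx', rfl⟩
    exact value_nonneg x' hx'
  · rw [best_response, add_comm]
    exact le_max_left _ _

/-- In scenario 2 of the impossibility construction (matching pennies for
`t < T/2`, the matrix `[[1,−1],[1,−1]]` afterwards, `T = 2m`), the best response value of
Player 2 equals `max(∑ (2αₜ−1) + T/2, ∑ (1−2αₜ) − T/2)`, the minimax value of the summed
game is 0, and consequently the best response value is at least `T/2 + ∑ (2αₜ−1)`. -/
theorem impossibility_scenario_two (m : ℕ) (hm : 0 < m)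
    (α : ℕ → ℝ) (hα : ∀ t, α t ∈ Set.Icc (0 : ℝ) 1)
    (A : ℕ → Fin 2 → Fin 2 → ℝ)
    (hA : ∀ t, A t = fun i j =>
      if t < m then (if i = j then (1 : ℝ) else -1) else (if j = 0 then 1 else -1))
    (x : ℕ → Fin 2 → ℝ)
    (hx : ∀ t, x t = fun i => if i = 0 then α t else 1 - α t) :
    sSup ((fun y => ∑ t ∈ range (2 * m), ∑ i, ∑ j, x t i * A t i j * y j)
        '' stdSimplex ℝ (Fin 2)) =
      max ((∑ t ∈ range m, (2 * α t - 1)) + m) ((∑ t ∈ range m, (1 - 2 * α t)) - m) ∧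
    sInf ((fun x' => sSup ((fun y => ∑ t ∈ range (2 * m), ∑ i, ∑ j, x' i * A t i j * y j)
        '' stdSimplex ℝ (Fin 2))) '' stdSimplex ℝ (Fin 2)) = 0 ∧
    (m : ℝ) + (∑ t ∈ range m, (2 * α t - 1)) ≤
      sSup ((fun y => ∑ t ∈ range (2 * m), ∑ i, ∑ j, x t i * A t i j * y j)
        '' stdSimplex ℝ (Fin 2)) :=
  impossibility_scenario_two_general m α A hA x hx
end
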